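/- arXiv:2511.00017 — 2 statements merged into one kernel-verified Lean document; each statement's English description precedes it below -/
import Mathlib

section
/- Let T₀ > 0 and k ≥ 0 be fixed real numbers. Then lim_{λ→∞} (1 - (2/π)·arctan(k/(λT₀)))^{(π/2)λ} = exp(-k/T₀). -/
open Filter Real Topology Asymptotics

/-! With `x = (π/2)λ` and `a = (π/2)(k/T₀)` the base is `1 - (2/π)·arctan(a/x)`. Since
`arctan'(0) = 1`, `x·arctan(a/x) → a`, so `x` times the deviation of the base from `1` tends to
`-(2/π)a = -k/T₀`, and `(1 + g x)^x → exp (lim x·g x)` gives the limit. -/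

theorem HasDerivAt.tendsto_mul_sub_comp_div_atTop {f : ℝ → ℝ} {f' : ℝ} (hf : HasDerivAt f f' 0)
    (a : ℝ) : Tendsto (fun x => x * (f (a / x) - f 0)) atTop (𝓝 (a * f')) := by
  have hf₀ : (fun y => f y - f 0 - y * f') =o[𝓝 0] fun y => y := by simpa using hf.isLittleO
  have hrem : (fun x : ℝ => f (a / x) - f 0 - a / x * f') =o[atTop] fun x => x⁻¹ :=
    (hf₀.comp_tendsto (tendsto_const_nhds.div_atTop tendsto_id)).trans_isBigO
      ((isBigO_refl _ _).const_mul_left a)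
  have hlim := hrem.tendsto_inv_smul_nhds_zero.add_const (a * f')
  rw [zero_add] at hlim
  refine hlim.congr' ?_
  filter_upwards [eventually_ne_atTop 0] with x hx
  simp only [inv_inv, smul_eq_mul]
  field_simp
  ring

theorem tendsto_mul_arctan_div_atTop (a : ℝ) :
    Tendsto (fun x => x * arctan (a / x)) atTop (𝓝 a) := by
  simpa using (hasDerivAt_arctan 0).tendsto_mul_sub_comp_div_atTop a

theorem arctan_power_tendsto_exp_general (T0 k : ℝ) :
    Tendsto
      (fun lam : ℝ =>
        (1 - (2 / Real.pi) * Real.arctan (k / (lam * T0))) ^ ((Real.pi / 2) * lam))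
      atTop (nhds (Real.exp (-k / T0))) := by
  set a := π / 2 * (k / T0)
  have harg (lam : ℝ) : a / (π / 2 * lam) = k / (lam * T0) := by
    rw [mul_div_mul_left _ _ pi_div_two_pos.ne', div_div, mul_comm]
  have hlim : -(2 / π) * a = -k / T0 := by
    have h : 2 / π * (π / 2) = 1 := by field_simp
    linear_combination (-(k / T0)) * h
  have hexp : Tendsto (fun x => x * (-(2 / π) * arctan (a / x))) atTop (𝓝 (-k / T0)) := by
    rw [← hlim]
    exact ((tendsto_mul_arctan_div_atTop a).const_mul _).congr fun x => by ring
  refine ((tendsto_one_add_rpow_exp_of_tendsto hexp).comp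
    (tendsto_id.const_mul_atTop pi_div_two_pos)).congr fun lam => ?_
  simp only [Function.comp_apply, id, harg, neg_mul, ← sub_eq_add_neg]

/-- For fixed `T₀ > 0` and `k ≥ 0`,
`(1 - (2/π)·arctan(k/(λT₀)))^((π/2)λ) → exp(-k/T₀)` as `λ → ∞`. -/
theorem arctan_power_tendsto_exp (T0 k : ℝ) (hT0 : 0 < T0) (hk : 0 ≤ k) :
    Tendsto
      (fun lam : ℝ =>
        (1 - (2 / Real.pi) * Real.arctan (k / (lam * T0))) ^ ((Real.pi / 2) * lam))
      atTop (nhds (Real.exp (-k / T0))) :=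
  arctan_power_tendsto_exp_general T0 k
end

section
/- Let α > 0, λ > 0 and T₀ > 0. Then ∫_{ℝ²} ω_{α,λ}(ξx,ξy) dξx dξy = π²·λ·T₀ / (2(α+1)), where ω_{α,λ}(ξx,ξy) = (1 - (2/π)·arctan(χ))^α / (1 + χ²) with χ = (ξx² + ξy²)/(λT₀). -/
open MeasureTheory Real Set Filter Topology

/-!
In polar coordinates a radial integrand `f (x² + y²)` on `ℝ²` integrates to `π ∫₀^∞ f(χ) dχ`, and
scaling `χ ↦ χ / (λT₀)` contributes the factor `λT₀`. The remaining one-dimensional integrand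
`(1 - (2/π) arctan χ)^α / (1 + χ²)` is the derivative of `-(π / (2(α+1))) (1 - (2/π) arctan χ)^(α+1)`,
which vanishes at infinity and equals `-π / (2(α+1))` at `0`.
-/

theorem integral_Ioi_smul_comp_sq {E : Type*} [NormedAddCommGroup E] [NormedSpace ℝ E]
    (f : ℝ → E) : ∫ r in Ioi 0, r • f (r ^ 2) = (2 : ℝ)⁻¹ • ∫ x in Ioi 0, f x := by
  rw [← integral_comp_rpow_Ioi_of_pos (g := f) two_pos, ← integral_smul]
  refine setIntegral_congr_fun measurableSet_Ioi fun r _ => ?_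
  norm_num [smul_smul]
  ring_nf

theorem integral_prod_comp_sq_add_sq (f : ℝ → ℝ) :
    ∫ p : ℝ × ℝ, f (p.1 ^ 2 + p.2 ^ 2) = π * ∫ x in Ioi 0, f x := by
  have hradial (p : ℝ × ℝ) :
      p.1 • f ((polarCoord.symm p).1 ^ 2 + (polarCoord.symm p).2 ^ 2) = p.1 * f (p.1 ^ 2) * 1 := by
    simp only [polarCoord_symm_apply, mul_pow, ← mul_add, cos_sq_add_sin_sq, mul_one, smul_eq_mul]
  have hsubst := integral_Ioi_smul_comp_sq f
  simp only [smul_eq_mul] at hsubst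
  rw [← integral_comp_polarCoord_symm]
  simp_rw [hradial]
  rw [polarCoord_target, Measure.volume_eq_prod,
    setIntegral_prod_mul (fun r => r * f (r ^ 2)) (fun _ => (1 : ℝ)), setIntegral_const,
    Real.volume_real_Ioo_of_le (by linarith [pi_pos]), hsubst]
  ring

theorem integral_Ioi_comp_div {E : Type*} [NormedAddCommGroup E] [NormedSpace ℝ E]
    (g : ℝ → E) {c : ℝ} (hc : 0 < c) : ∫ x in Ioi 0, g (x / c) = c • ∫ x in Ioi 0, g x := by
  simpa [div_eq_inv_mul] using integral_comp_mul_left_Ioi g 0 (inv_pos.2 hc)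

theorem one_sub_two_div_pi_mul_arctan_pos (x : ℝ) : 0 < 1 - 2 / π * arctan x := by
  have := arctan_lt_pi_div_two x
  rw [sub_pos, div_mul_eq_mul_div, div_lt_one pi_pos]
  linarith

theorem tendsto_one_sub_two_div_pi_mul_arctan_atTop :
    Tendsto (fun x => 1 - 2 / π * arctan x) atTop (𝓝 0) := by
  have h := (tendsto_arctan_atTop.mono_right nhdsWithin_le_nhds).const_mul (2 / π)
  rw [show 2 / π * (π / 2) = 1 by field_simp] at h
  simpa using h.const_sub 1

theorem hasDerivAt_one_sub_two_div_pi_mul_arctan_rpow (p x : ℝ) :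
    HasDerivAt (fun x => (1 - 2 / π * arctan x) ^ p)
      (-(2 / π) * p * (1 - 2 / π * arctan x) ^ (p - 1) / (1 + x ^ 2)) x := by
  have h := (((hasDerivAt_arctan x).const_mul (2 / π)).const_sub 1).rpow_const
    (p := p) (Or.inl (one_sub_two_div_pi_mul_arctan_pos x).ne')
  convert h using 1
  ring

theorem integral_Ioi_one_sub_two_div_pi_mul_arctan_rpow_div {α : ℝ} (hα : -1 < α) :
    ∫ x in Ioi 0, (1 - 2 / π * arctan x) ^ α / (1 + x ^ 2) = π / (2 * (α + 1)) := by
  have hα₁ : α + 1 ≠ 0 := by linarith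
  set F : ℝ → ℝ := fun x => -(π / (2 * (α + 1))) * (1 - 2 / π * arctan x) ^ (α + 1)
  have hderiv (x : ℝ) : HasDerivAt F ((1 - 2 / π * arctan x) ^ α / (1 + x ^ 2)) x := by
    refine ((hasDerivAt_one_sub_two_div_pi_mul_arctan_rpow (α + 1) x).const_mul
      (-(π / (2 * (α + 1))))).congr_deriv ?_
    rw [add_sub_cancel_right]
    field_simp
  have hnonneg (x : ℝ) : 0 ≤ (1 - 2 / π * arctan x) ^ α / (1 + x ^ 2) := by
    have := one_sub_two_div_pi_mul_arctan_pos x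
    positivity
  have hlim : Tendsto F atTop (𝓝 0) := by
    have h := (tendsto_one_sub_two_div_pi_mul_arctan_atTop.rpow_const
      (p := α + 1) (Or.inr (by linarith))).const_mul (-(π / (2 * (α + 1))))
    rwa [zero_rpow hα₁, mul_zero] at h
  rw [integral_Ioi_of_hasDerivAt_of_nonneg' (fun x _ => hderiv x) (fun x _ => hnonneg x) hlim]
  simp [F]

/-- Total mass of the ATGJ weight function:
`∫_{ℝ²} ω_{α,λ} = π²λT₀ / (2(α+1))`. -/
theorem atgj_weight_integral (α lam T0 : ℝ) (hα : 0 < α) (hlam : 0 < lam) (hT0 : 0 < T0) :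
    ∫ p : ℝ × ℝ,
        (1 - (2 / Real.pi) * Real.arctan ((p.1 ^ 2 + p.2 ^ 2) / (lam * T0))) ^ α
          / (1 + ((p.1 ^ 2 + p.2 ^ 2) / (lam * T0)) ^ 2)
      = Real.pi ^ 2 * lam * T0 / (2 * (α + 1)) := by
  have hc : 0 < lam * T0 := mul_pos hlam hT0
  rw [integral_prod_comp_sq_add_sq fun χ => (1 - 2 / π * arctan (χ / (lam * T0))) ^ α
      / (1 + (χ / (lam * T0)) ^ 2),
    integral_Ioi_comp_div (fun χ => (1 - 2 / π * arctan χ) ^ α / (1 + χ ^ 2)) hc,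
    integral_Ioi_one_sub_two_div_pi_mul_arctan_rpow_div (by linarith), smul_eq_mul]
  field_simp
end
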